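/- Let Λ be an index set and let D^{(0)} := B_Λ. Then the sequence of derived distributions stabilizes after n steps: D^{(n)} = D^{(n+1)}, and D^{(n)} equals the Lie subalgebra generated by B_Λ, i.e., the smallest real subspace of se(n) containing B_Λ that is closed under the bracket. -/

import Mathlib

open Matrix

attribute [local instance 100] LieRing.ofAssociativeRing

/-!
Common setup: real (n+1)×(n+1) matrices (rows/columns indexed by `Fin (n+1)`,
where index `i : Fin n` cast via `Fin.castSucc` plays the role of `i ∈ {1,…,n}`
and `Fin.last n` plays the role of the index `n+1`), the Lie bracket
`⁅A,B⁆ = A*B - B*A`, the matrices `Ω̃_{ij}` and `E_{k,n+1}`, the Lie algebra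
`se(n)`, index sets `Λ`, pattern subspaces `B_Λ`, graphs with solid/broken
edges, the one-step transitive closure, and derived distributions.
-/

/-- The ambient space of real (n+1)×(n+1) matrices. -/
abbrev Mat (n : ℕ) := Matrix (Fin (n + 1)) (Fin (n + 1)) ℝ

/-- `Ω̃_{ij}`: 1 in entry (i,j), −1 in entry (j,i), 0 elsewhere (indices among 1,…,n). -/
def Omega {n : ℕ} (i j : Fin n) : Mat n :=
  Matrix.single i.castSucc j.castSucc 1 - Matrix.single j.castSucc i.castSucc 1

/-- `E_{k,n+1}`: 1 in entry (k, n+1), 0 elsewhere. -/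
def Ecol {n : ℕ} (k : Fin n) : Mat n :=
  Matrix.single k.castSucc (Fin.last n) 1

/-- The set se(n): matrices whose (n+1)-th row is zero and with
`M(i,j) = −M(j,i)` for all 1 ≤ i,j ≤ n. -/
def seSet (n : ℕ) : Set (Mat n) :=
  {M | (∀ j, M (Fin.last n) j = 0) ∧
    ∀ i j : Fin n, M i.castSucc j.castSucc = - M j.castSucc i.castSucc}

/-- se(n) as a real subspace of the (n+1)×(n+1) matrices. -/
def seL (n : ℕ) : Submodule ℝ (Mat n) where
  carrier := seSet n
  add_mem' := by
    rintro a b ⟨ha1, ha2⟩ ⟨hb1, hb2⟩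
    refine ⟨fun j => ?_, fun i j => ?_⟩
    · simp [Matrix.add_apply, ha1 j, hb1 j]
    · simp only [Matrix.add_apply, ha2 i j, hb2 i j]; ring
  zero_mem' := by
    refine ⟨fun j => ?_, fun i j => ?_⟩ <;> simp
  smul_mem' := by
    rintro c a ⟨ha1, ha2⟩
    refine ⟨fun j => ?_, fun i j => ?_⟩
    · simp [Matrix.smul_apply, ha1 j]
    · simp only [Matrix.smul_apply, ha2 i j, smul_neg]

/-- Kronecker delta (real-valued). -/
def kron {n : ℕ} (p q : Fin n) : ℝ := if p = q then 1 else 0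

/-- An index set Λ: a set of pairs (p,q) with p < q, i.e. a subset of
`{(i,j) : 1 ≤ i < j ≤ n} ∪ {(k, n+1) : 1 ≤ k ≤ n}`. -/
def IndexSet {n : ℕ} (Λ : Set (Fin (n + 1) × Fin (n + 1))) : Prop :=
  ∀ e ∈ Λ, e.1 < e.2

/-- The generating set `{Ω̃_{ij} : (i,j) ∈ Λ, j ≤ n} ∪ {E_{k,n+1} : (k,n+1) ∈ Λ}`. -/
def genSet {n : ℕ} (Λ : Set (Fin (n + 1) × Fin (n + 1))) : Set (Mat n) :=
  {M | (∃ i j : Fin n, (i.castSucc, j.castSucc) ∈ Λ ∧ M = Omega i j) ∨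
    (∃ k : Fin n, (k.castSucc, Fin.last n) ∈ Λ ∧ M = Ecol k)}

/-- The pattern subspace `B_Λ`. -/
def BLam {n : ℕ} (Λ : Set (Fin (n + 1) × Fin (n + 1))) : Submodule ℝ (Mat n) :=
  Submodule.span ℝ (genSet Λ)

/-- `B_Λ` generates `se(n)` as a Lie algebra: the smallest real subspace containing
`B_Λ` and closed under the bracket (i.e. the Lie subalgebra generated by `B_Λ`)
equals `se(n)`. -/
def GeneratesSE (n : ℕ) (Λ : Set (Fin (n + 1) × Fin (n + 1))) : Prop :=
  (LieSubalgebra.lieSpan ℝ (Mat n) (BLam Λ : Set (Mat n)) : Set (Mat n)) = seSet n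

/-- A graph on vertices {1,…,n+1} recorded by its solid and broken adjacency relations. -/
structure SBGraph (n : ℕ) where
  solid : Fin (n + 1) → Fin (n + 1) → Prop
  broken : Fin (n + 1) → Fin (n + 1) → Prop

/-- A well-formed solid/broken graph: simple and symmetric; solid edges have both
endpoints among 1,…,n, broken edges have one endpoint equal to n+1. -/
def SBGraph.Good {n : ℕ} (G : SBGraph n) : Prop :=
  (∀ p q, G.solid p q → G.solid q p) ∧ (∀ p q, G.solid p q → p ≠ q) ∧
  (∀ p q, G.solid p q → p ≠ Fin.last n ∧ q ≠ Fin.last n) ∧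
  (∀ p q, G.broken p q → G.broken q p) ∧ (∀ p q, G.broken p q → p ≠ q) ∧
  (∀ p q, G.broken p q → p = Fin.last n ∨ q = Fin.last n)

/-- The one-step closure: for distinct vertices i,j,k, add a solid edge {i,k} whenever
{i,j} and {j,k} are both solid, and a broken edge {i,k} whenever one of {i,j},{j,k} is
solid and the other is broken (nothing is added when both are broken). -/
def SBGraph.step {n : ℕ} (G : SBGraph n) : SBGraph n where
  solid := fun i k => G.solid i k ∨
    (∃ j, i ≠ j ∧ j ≠ k ∧ i ≠ k ∧ G.solid i j ∧ G.solid j k)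
  broken := fun i k => G.broken i k ∨
    (∃ j, i ≠ j ∧ j ≠ k ∧ i ≠ k ∧
      ((G.solid i j ∧ G.broken j k) ∨ (G.broken i j ∧ G.solid j k)))

/-- The l-th transitive closure `G^{(l)}`. -/
def SBGraph.closure {n : ℕ} (G : SBGraph n) (l : ℕ) : SBGraph n :=
  (fun H => SBGraph.step H)^[l] G

/-- `G` is the complete graph on the n+1 vertices: every pair of distinct vertices
is joined by a (solid or broken) edge. -/
def SBGraph.IsComplete {n : ℕ} (G : SBGraph n) : Prop :=
  ∀ p q : Fin (n + 1), p ≠ q → G.solid p q ∨ G.broken p q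

/-- The graph `G(B_Λ)` associated with a pattern: solid edges {i,j} for (i,j) ∈ Λ with
j ≤ n, broken edges {k,n+1} for (k,n+1) ∈ Λ. -/
def patternGraph {n : ℕ} (Λ : Set (Fin (n + 1) × Fin (n + 1))) : SBGraph n where
  solid := fun p q => ∃ i j : Fin n, (i.castSucc, j.castSucc) ∈ Λ ∧
    ((p = i.castSucc ∧ q = j.castSucc) ∨ (p = j.castSucc ∧ q = i.castSucc))
  broken := fun p q => ∃ k : Fin n, (k.castSucc, Fin.last n) ∈ Λ ∧
    ((p = k.castSucc ∧ q = Fin.last n) ∨ (p = Fin.last n ∧ q = k.castSucc))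

/-- One step of the derived-distribution construction:
`D ↦ D + span{[A₁,A₂] : A₁,A₂ ∈ D}`. -/
def derivedStep {n : ℕ} (D : Submodule ℝ (Mat n)) : Submodule ℝ (Mat n) :=
  D ⊔ Submodule.span ℝ {M | ∃ A B, A ∈ D ∧ B ∈ D ∧ M = A * B - B * A}

/-- The i-th derived distribution `D^{(i)}`. -/
def derivedIter {n : ℕ} (D : Submodule ℝ (Mat n)) (i : ℕ) : Submodule ℝ (Mat n) :=
  (fun S => derivedStep S)^[i] D

/-!
The brackets of the basis matrices are `[Ω̃_ij, Ω̃_jk] = Ω̃_ik` and `[Ω̃_ij, E_j] = E_i` for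
distinct indices, and otherwise zero or one of these up to sign. Hence every derived
distribution of `B_Λ` is again a pattern subspace: `D^{(l)}` is spanned by the `Ω̃`'s and `E`'s
of the `l`-th transitive closure of the graph `G(B_Λ)`. In that closure `{p, q}` is solid iff
`p` and `q` are joined by a solid walk of length at most `2^l`, and `{p, n+1}` is broken iff a
solid walk of length less than `2^l` leads from `p` to a broken edge. Walks shorten to paths,
which have at most `n < 2^n` edges, so the closure no longer grows after `n` steps. Then
`D^{(n)}` is closed under the bracket and is therefore the Lie subalgebra generated by `B_Λ`.
-/

theorem single_one_mul_single_one {ι R : Type*} [Fintype ι] [DecidableEq ι] [Semiring R]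
    (a b c d : ι) :
    single a b (1 : R) * single c d 1 = if b = c then single a d 1 else 0 := by
  split_ifs with h
  · rw [h, single_mul_single_same, one_mul]
  · exact single_mul_single_of_ne 1 a b c h 1

section Brackets

variable {n : ℕ}

theorem kron_smul_mem {M : Type*} [AddCommMonoid M] [Module ℝ M] {P : Submodule ℝ M}
    {p q : Fin n} {x : M} (h : p = q → x ∈ P) : kron p q • x ∈ P := by
  unfold kron
  split_ifs with hpq
  · simpa using h hpq
  · simp

theorem omega_swap (i j : Fin n) : Omega j i = -Omega i j := by
  rw [Omega, Omega, neg_sub]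

theorem omega_self (i : Fin n) : Omega i i = 0 :=
  sub_self _

theorem omega_bracket_omega (i j k l : Fin n) :
    Omega i j * Omega k l - Omega k l * Omega i j =
      kron j k • Omega i l - kron j l • Omega i k - kron i k • Omega j l +
        kron i l • Omega j k := by
  simp only [Omega, kron, sub_mul, mul_sub, single_one_mul_single_one, Fin.castSucc_inj]
  split_ifs <;> subst_vars <;> simp_all <;> abel

theorem omega_bracket_ecol (i j k : Fin n) :
    Omega i j * Ecol k - Ecol k * Omega i j = kron j k • Ecol i - kron i k • Ecol j := by
  simp only [Omega, Ecol, kron, sub_mul, mul_sub, single_one_mul_single_one, Fin.castSucc_inj,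
    (Fin.castSucc_lt_last _).ne']
  split_ifs <;> simp_all

theorem ecol_bracket_ecol (k l : Fin n) : Ecol k * Ecol l - Ecol l * Ecol k = 0 := by
  simp [Ecol, (Fin.castSucc_lt_last _).ne']

end Brackets

section DerivedDistributions

variable {n : ℕ}

theorem derivedStep_span (S : Set (Mat n)) :
    derivedStep (Submodule.span ℝ S) =
      Submodule.span ℝ (S ∪ Set.image2 (fun A B => A * B - B * A) S S) := by
  let bracket : Mat n →ₗ[ℝ] Mat n →ₗ[ℝ] Mat n :=
    LinearMap.mul ℝ _ - (LinearMap.mul ℝ _).flip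
  have hbracket : ∀ A B, bracket A B = A * B - B * A := fun _ _ => rfl
  have hset : {M | ∃ A B, A ∈ Submodule.span ℝ S ∧ B ∈ Submodule.span ℝ S ∧
      M = A * B - B * A} =
      Set.image2 (fun A B => bracket A B) (Submodule.span ℝ S) (Submodule.span ℝ S) := by
    ext M
    simp [hbracket, eq_comm]
  rw [derivedStep, hset, ← Submodule.map₂_eq_span_image2, Submodule.map₂_span_span,
    Submodule.span_union]
  simp only [hbracket]

theorem derivedIter_succ (D : Submodule ℝ (Mat n)) (l : ℕ) :
    derivedIter D (l + 1) = derivedStep (derivedIter D l) :=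
  Function.iterate_succ_apply' _ _ _

theorem derivedIter_le_succ (D : Submodule ℝ (Mat n)) (l : ℕ) :
    derivedIter D l ≤ derivedIter D (l + 1) := by
  rw [derivedIter_succ]
  exact le_sup_left

theorem le_derivedIter (D : Submodule ℝ (Mat n)) (l : ℕ) : D ≤ derivedIter D l :=
  monotone_nat_of_le_succ (derivedIter_le_succ D) (Nat.zero_le l)

theorem derivedIter_le_lieSpan (D : Submodule ℝ (Mat n)) (l : ℕ) :
    derivedIter D l ≤ (LieSubalgebra.lieSpan ℝ (Mat n) (D : Set (Mat n))).toSubmodule := by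
  induction l with
  | zero => exact fun x hx => LieSubalgebra.subset_lieSpan hx
  | succ l ih =>
    rw [derivedIter_succ]
    refine sup_le ih (Submodule.span_le.mpr ?_)
    rintro M ⟨A, B, hA, hB, rfl⟩
    exact Ring.lie_def A B ▸ LieSubalgebra.lie_mem _ (ih hA) (ih hB)

theorem lieSpan_eq_derivedIter (D : Submodule ℝ (Mat n)) {l : ℕ}
    (h : derivedIter D (l + 1) ≤ derivedIter D l) :
    (LieSubalgebra.lieSpan ℝ (Mat n) (D : Set (Mat n)) : Set (Mat n)) = derivedIter D l := by
  let K : LieSubalgebra ℝ (Mat n) :=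
    { toSubmodule := derivedIter D l
      lie_mem' := fun {A B} hA hB => by
        rw [Ring.lie_def]
        refine h ?_
        rw [derivedIter_succ]
        exact Submodule.mem_sup_right (Submodule.subset_span ⟨A, B, hA, hB, rfl⟩) }
  refine Set.Subset.antisymm ?_ (derivedIter_le_lieSpan D l)
  exact (LieSubalgebra.lieSpan_le (K := K)).mpr (le_derivedIter D l)

end DerivedDistributions

theorem SimpleGraph.Walk.exists_split {V : Type*} {G : SimpleGraph V} {u v : V}
    (w : G.Walk u v) (a : ℕ) :
    ∃ x, ∃ w₁ : G.Walk u x, ∃ w₂ : G.Walk x v,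
      w₁.length ≤ a ∧ w₂.length = w.length - a :=
  ⟨_, w.take a, w.drop a, by simp [Walk.take_length], w.drop_length a⟩

namespace SBGraph

variable {n : ℕ} {G : SBGraph n}

theorem closure_succ (G : SBGraph n) (l : ℕ) : G.closure (l + 1) = (G.closure l).step :=
  Function.iterate_succ_apply' _ _ _

theorem Good.solid_symm (hG : G.Good) {p q : Fin (n + 1)} (h : G.solid p q) : G.solid q p :=
  hG.1 p q h

theorem Good.solid_ne (hG : G.Good) {p q : Fin (n + 1)} (h : G.solid p q) : p ≠ q :=
  hG.2.1 p q h

theorem Good.solid_ne_last (hG : G.Good) {p q : Fin (n + 1)} (h : G.solid p q) :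
    p ≠ Fin.last n ∧ q ≠ Fin.last n :=
  hG.2.2.1 p q h

theorem Good.step (hG : G.Good) : G.step.Good := by
  obtain ⟨hss, hsn, hsl, hbs, hbn, hbl⟩ := hG
  refine ⟨?_, ?_, ?_, ?_, ?_, ?_⟩
  · rintro p q (h | ⟨j, h₁, h₂, h₃, h₄, h₅⟩)
    · exact Or.inl (hss _ _ h)
    · exact Or.inr ⟨j, h₂.symm, h₁.symm, h₃.symm, hss _ _ h₅, hss _ _ h₄⟩
  · rintro p q (h | ⟨j, -, -, h, -⟩)
    · exact hsn _ _ h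
    · exact h
  · rintro p q (h | ⟨j, -, -, -, h₄, h₅⟩)
    · exact hsl _ _ h
    · exact ⟨(hsl _ _ h₄).1, (hsl _ _ h₅).2⟩
  · rintro p q (h | ⟨j, h₁, h₂, h₃, ⟨h₄, h₅⟩ | ⟨h₄, h₅⟩⟩)
    · exact Or.inl (hbs _ _ h)
    · exact Or.inr ⟨j, h₂.symm, h₁.symm, h₃.symm, .inr ⟨hbs _ _ h₅, hss _ _ h₄⟩⟩
    · exact Or.inr ⟨j, h₂.symm, h₁.symm, h₃.symm, .inl ⟨hss _ _ h₅, hbs _ _ h₄⟩⟩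
  · rintro p q (h | ⟨j, -, -, h, -⟩)
    · exact hbn _ _ h
    · exact h
  · rintro p q (h | ⟨j, -, -, -, ⟨h₄, h₅⟩ | ⟨h₄, h₅⟩⟩)
    · exact hbl _ _ h
    · exact (hbl _ _ h₅).imp_left fun hj => absurd hj (hsl _ _ h₄).2
    · exact (hbl _ _ h₄).imp_right fun hj => absurd hj (hsl _ _ h₅).1

theorem Good.closure (hG : G.Good) (l : ℕ) : (G.closure l).Good := by
  induction l with
  | zero => exact hG
  | succ l ih => exact closure_succ G l ▸ ih.step

def solidGraph (G : SBGraph n) : SimpleGraph (Fin (n + 1)) :=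
  SimpleGraph.fromRel G.solid

theorem Good.solidGraph_adj (hG : G.Good) {p q : Fin (n + 1)} :
    G.solidGraph.Adj p q ↔ G.solid p q := by
  rw [solidGraph, SimpleGraph.fromRel_adj]
  exact ⟨fun ⟨_, h⟩ => h.elim id hG.solid_symm, fun h => ⟨hG.solid_ne h, Or.inl h⟩⟩

theorem Good.closure_solid_iff (hG : G.Good) (l : ℕ) {p q : Fin (n + 1)} :
    (G.closure l).solid p q ↔ p ≠ q ∧ ∃ w : G.solidGraph.Walk p q, w.length ≤ 2 ^ l := by
  induction l generalizing p q with
  | zero =>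
    refine ⟨fun h => ⟨hG.solid_ne h, (hG.solidGraph_adj.mpr h).toWalk, by simp⟩, ?_⟩
    rintro ⟨hpq, w, hw⟩
    have hw₀ : w.length ≠ 0 := mt SimpleGraph.Walk.eq_of_length_eq_zero hpq
    simp only [pow_zero] at hw
    exact hG.solidGraph_adj.mp (SimpleGraph.Walk.adj_of_length_eq_one (p := w) (by omega))
  | succ l ih =>
    rw [closure_succ, pow_succ, mul_two]
    constructor
    · rintro (h | ⟨r, -, -, hpq, hpr, hrq⟩)
      · obtain ⟨hpq, w, hw⟩ := ih.mp h
        exact ⟨hpq, w, by omega⟩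
      · obtain ⟨-, w₁, hw₁⟩ := ih.mp hpr
        obtain ⟨-, w₂, hw₂⟩ := ih.mp hrq
        exact ⟨hpq, w₁.append w₂, by rw [SimpleGraph.Walk.length_append]; omega⟩
    · rintro ⟨hpq, w, hw⟩
      obtain ⟨r, w₁, w₂, hw₁, hw₂⟩ := w.exists_split (2 ^ l)
      replace hw₂ : w₂.length ≤ 2 ^ l := by omega
      by_cases hrp : r = p
      · subst hrp
        exact Or.inl (ih.mpr ⟨hpq, w₂, hw₂⟩)
      by_cases hrq : r = q
      · subst hrq
        exact Or.inl (ih.mpr ⟨hpq, w₁, hw₁⟩)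
      exact Or.inr ⟨r, Ne.symm hrp, hrq, hpq, ih.mpr ⟨Ne.symm hrp, w₁, hw₁⟩,
        ih.mpr ⟨hrq, w₂, hw₂⟩⟩

theorem Good.closure_broken_iff (hG : G.Good) (l : ℕ) {p : Fin (n + 1)} :
    (G.closure l).broken p (Fin.last n) ↔
      ∃ r, G.broken r (Fin.last n) ∧ ∃ w : G.solidGraph.Walk p r, w.length < 2 ^ l := by
  induction l generalizing p with
  | zero =>
    refine ⟨fun h => ⟨p, h, .nil, by simp⟩, ?_⟩
    rintro ⟨r, hr, w, hw⟩
    obtain rfl := SimpleGraph.Walk.eq_of_length_eq_zero (p := w) (by simpa using hw)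
    exact hr
  | succ l ih =>
    have hl := hG.closure l
    have hpos := Nat.two_pow_pos l
    rw [closure_succ, pow_succ, mul_two]
    constructor
    · rintro (h | ⟨j, -, -, -, ⟨hpj, hj⟩ | ⟨-, hj⟩⟩)
      · obtain ⟨r, hr, w, hw⟩ := ih.mp h
        exact ⟨r, hr, w, by omega⟩
      · obtain ⟨-, w₁, hw₁⟩ := (hG.closure_solid_iff l).mp hpj
        obtain ⟨r, hr, w₂, hw₂⟩ := ih.mp hj
        exact ⟨r, hr, w₁.append w₂, by rw [SimpleGraph.Walk.length_append]; omega⟩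
      · exact absurd rfl (hl.solid_ne_last hj).2
    · rintro ⟨r, hr, w, hw⟩
      -- split so that the tail has length `2 ^ l - 1`, or is all of `w` if `w` is shorter
      obtain ⟨x, w₁, w₂, hw₁, hw₂⟩ := w.exists_split (w.length + 1 - 2 ^ l)
      have hx : (G.closure l).broken x (Fin.last n) := ih.mpr ⟨r, hr, w₂, by omega⟩
      by_cases hxp : x = p
      · subst hxp
        exact Or.inl hx
      have hpx : (G.closure l).solid p x :=
        (hG.closure_solid_iff l).mpr ⟨Ne.symm hxp, w₁, by omega⟩
      exact Or.inr ⟨x, Ne.symm hxp, (hl.solid_ne_last hpx).2, (hl.solid_ne_last hpx).1,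
        Or.inl ⟨hpx, hx⟩⟩

theorem Good.closure_solid_stable (hG : G.Good) (l : ℕ) {p q : Fin (n + 1)}
    (h : (G.closure l).solid p q) : (G.closure n).solid p q := by
  obtain ⟨hpq, w, -⟩ := (hG.closure_solid_iff l).mp h
  have hlen := w.bypass_isPath.length_lt
  have hn := n.lt_two_pow_self
  simp only [Fintype.card_fin] at hlen
  exact (hG.closure_solid_iff n).mpr ⟨hpq, w.bypass, by omega⟩

theorem Good.closure_broken_stable (hG : G.Good) (l : ℕ) {p : Fin (n + 1)}
    (h : (G.closure l).broken p (Fin.last n)) : (G.closure n).broken p (Fin.last n) := by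
  obtain ⟨r, hr, w, -⟩ := (hG.closure_broken_iff l).mp h
  have hlen := w.bypass_isPath.length_lt
  have hn := n.lt_two_pow_self
  simp only [Fintype.card_fin] at hlen
  exact (hG.closure_broken_iff n).mpr ⟨r, hr, w.bypass, by omega⟩

def patternGens (G : SBGraph n) : Set (Mat n) :=
  {M | (∃ i j : Fin n, G.solid i.castSucc j.castSucc ∧ M = Omega i j) ∨
    (∃ k : Fin n, G.broken k.castSucc (Fin.last n) ∧ M = Ecol k)}

def patternSubspace (G : SBGraph n) : Submodule ℝ (Mat n) :=
  Submodule.span ℝ G.patternGens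

theorem omega_mem_patternSubspace {i j : Fin n} (h : G.solid i.castSucc j.castSucc) :
    Omega i j ∈ G.patternSubspace :=
  Submodule.subset_span (Or.inl ⟨i, j, h, rfl⟩)

theorem ecol_mem_patternSubspace {k : Fin n} (h : G.broken k.castSucc (Fin.last n)) :
    Ecol k ∈ G.patternSubspace :=
  Submodule.subset_span (Or.inr ⟨k, h, rfl⟩)

theorem patternGens_mono {H : SBGraph n} (hs : ∀ p q, G.solid p q → H.solid p q)
    (hb : ∀ p, G.broken p (Fin.last n) → H.broken p (Fin.last n)) :
    G.patternGens ⊆ H.patternGens := by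
  rintro M (⟨i, j, h, rfl⟩ | ⟨k, h, rfl⟩)
  · exact Or.inl ⟨i, j, hs _ _ h, rfl⟩
  · exact Or.inr ⟨k, hb _ h, rfl⟩

theorem Good.omega_mem_step (hG : G.Good) {i j k : Fin n} (hij : G.solid i.castSucc j.castSucc)
    (hjk : G.solid j.castSucc k.castSucc) : Omega i k ∈ G.step.patternSubspace := by
  by_cases hik : i = k
  · rw [hik, omega_self]
    exact zero_mem _
  · exact omega_mem_patternSubspace
      (Or.inr ⟨_, hG.solid_ne hij, hG.solid_ne hjk, by simpa using hik, hij, hjk⟩)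

theorem Good.ecol_mem_step (hG : G.Good) {i j : Fin n} (hij : G.solid i.castSucc j.castSucc)
    (hj : G.broken j.castSucc (Fin.last n)) : Ecol i ∈ G.step.patternSubspace :=
  ecol_mem_patternSubspace (Or.inr ⟨_, hG.solid_ne hij, (hG.solid_ne_last hij).2,
    (hG.solid_ne_last hij).1, Or.inl ⟨hij, hj⟩⟩)

theorem Good.bracket_mem_step (hG : G.Good) {a b : Mat n} (ha : a ∈ G.patternGens)
    (hb : b ∈ G.patternGens) : a * b - b * a ∈ G.step.patternSubspace := by
  have omega_ecol : ∀ {i j k : Fin n}, G.solid i.castSucc j.castSucc →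
      G.broken k.castSucc (Fin.last n) →
      Omega i j * Ecol k - Ecol k * Omega i j ∈ G.step.patternSubspace := by
    intro i j k hij hk
    rw [omega_bracket_ecol]
    refine sub_mem (kron_smul_mem fun hjk => ?_) (kron_smul_mem fun hik => ?_)
    · exact hG.ecol_mem_step hij (hjk ▸ hk)
    · exact hG.ecol_mem_step (hG.solid_symm hij) (hik ▸ hk)
  rcases ha with ⟨i, j, hij, rfl⟩ | ⟨k, hk, rfl⟩ <;>
    rcases hb with ⟨k', l, hkl, rfl⟩ | ⟨m, hm, rfl⟩
  · rw [omega_bracket_omega]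
    refine add_mem (sub_mem (sub_mem ?_ ?_) ?_) ?_ <;> refine kron_smul_mem fun h => ?_ <;>
      subst h
    · exact hG.omega_mem_step hij hkl
    · exact hG.omega_mem_step hij (hG.solid_symm hkl)
    · exact hG.omega_mem_step (hG.solid_symm hij) hkl
    · exact hG.omega_mem_step (hG.solid_symm hij) (hG.solid_symm hkl)
  · exact omega_ecol hij hm
  · rw [← neg_sub]
    exact neg_mem (omega_ecol hkl hk)
  · rw [ecol_bracket_ecol]
    exact zero_mem _

theorem Good.step_patternGens_subset (hG : G.Good) :
    G.step.patternGens ⊆ Submodule.span ℝ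
      (G.patternGens ∪ Set.image2 (fun A B => A * B - B * A) G.patternGens G.patternGens) := by
  rintro M (⟨i, k, h | ⟨j, hij, hjk, hik, hs₁, hs₂⟩, rfl⟩ |
    ⟨i, h | ⟨j, hij, hj, -, ⟨hs, hb⟩ | ⟨-, hs⟩⟩, rfl⟩)
  · exact Submodule.subset_span (Or.inl (Or.inl ⟨i, k, h, rfl⟩))
  · obtain ⟨j, rfl⟩ := Fin.exists_castSucc_eq.mpr (hG.solid_ne_last hs₁).2
    refine Submodule.subset_span
      (Or.inr ⟨_, Or.inl ⟨i, j, hs₁, rfl⟩, _, Or.inl ⟨j, k, hs₂, rfl⟩, ?_⟩)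
    simp_all [omega_bracket_omega, kron]
  · exact Submodule.subset_span (Or.inl (Or.inr ⟨i, h, rfl⟩))
  · obtain ⟨j, rfl⟩ := Fin.exists_castSucc_eq.mpr hj
    refine Submodule.subset_span
      (Or.inr ⟨_, Or.inl ⟨i, j, hs, rfl⟩, _, Or.inr ⟨j, hb, rfl⟩, ?_⟩)
    simp_all [omega_bracket_ecol, kron]
  · exact absurd rfl (hG.solid_ne_last hs).2

theorem Good.derivedStep_patternSubspace (hG : G.Good) :
    derivedStep G.patternSubspace = G.step.patternSubspace := by
  rw [patternSubspace, derivedStep_span]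
  refine le_antisymm (Submodule.span_le.mpr ?_) (Submodule.span_le.mpr hG.step_patternGens_subset)
  rintro M (hM | ⟨a, ha, b, hb, rfl⟩)
  · exact Submodule.subset_span (patternGens_mono (fun _ _ => Or.inl) (fun _ => Or.inl) hM)
  · exact hG.bracket_mem_step ha hb

end SBGraph

namespace IndexSet

variable {n : ℕ} {Λ : Set (Fin (n + 1) × Fin (n + 1))}

theorem good_patternGraph (hΛ : IndexSet Λ) : (patternGraph Λ).Good := by
  have cs_ne_last := fun i : Fin n => (Fin.castSucc_lt_last i).ne
  refine ⟨?_, ?_, ?_, ?_, ?_, ?_⟩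
  · rintro p q ⟨i, j, hm, ⟨rfl, rfl⟩ | ⟨rfl, rfl⟩⟩
    · exact ⟨i, j, hm, Or.inr ⟨rfl, rfl⟩⟩
    · exact ⟨i, j, hm, Or.inl ⟨rfl, rfl⟩⟩
  · rintro p q ⟨i, j, hm, ⟨rfl, rfl⟩ | ⟨rfl, rfl⟩⟩
    · exact (hΛ _ hm).ne
    · exact (hΛ _ hm).ne'
  · rintro p q ⟨i, j, hm, ⟨rfl, rfl⟩ | ⟨rfl, rfl⟩⟩
    · exact ⟨cs_ne_last i, cs_ne_last j⟩
    · exact ⟨cs_ne_last j, cs_ne_last i⟩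
  · rintro p q ⟨k, hm, ⟨rfl, rfl⟩ | ⟨rfl, rfl⟩⟩
    · exact ⟨k, hm, Or.inr ⟨rfl, rfl⟩⟩
    · exact ⟨k, hm, Or.inl ⟨rfl, rfl⟩⟩
  · rintro p q ⟨k, hm, ⟨rfl, rfl⟩ | ⟨rfl, rfl⟩⟩
    · exact cs_ne_last k
    · exact (cs_ne_last k).symm
  · rintro p q ⟨k, hm, ⟨rfl, rfl⟩ | ⟨rfl, rfl⟩⟩
    · exact Or.inr rfl
    · exact Or.inl rfl

end IndexSet

section Stabilization

variable {n : ℕ} {Λ : Set (Fin (n + 1) × Fin (n + 1))}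

theorem BLam_eq_patternSubspace : BLam Λ = (patternGraph Λ).patternSubspace := by
  apply le_antisymm
  · refine Submodule.span_le.mpr ?_
    rintro M (⟨i, j, hm, rfl⟩ | ⟨k, hm, rfl⟩)
    · exact SBGraph.omega_mem_patternSubspace ⟨i, j, hm, Or.inl ⟨rfl, rfl⟩⟩
    · exact SBGraph.ecol_mem_patternSubspace ⟨k, hm, Or.inl ⟨rfl, rfl⟩⟩
  · refine Submodule.span_le.mpr ?_
    rintro M (⟨i, j, ⟨i', j', hm, ⟨hi, hj⟩ | ⟨hi, hj⟩⟩, rfl⟩ |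
      ⟨k, ⟨k', hm, ⟨hk, -⟩ | ⟨hk, -⟩⟩, rfl⟩)
    · obtain rfl := Fin.castSucc_injective _ hi
      obtain rfl := Fin.castSucc_injective _ hj
      exact Submodule.subset_span (Or.inl ⟨i, j, hm, rfl⟩)
    · obtain rfl := Fin.castSucc_injective _ hi
      obtain rfl := Fin.castSucc_injective _ hj
      rw [omega_swap]
      exact neg_mem (Submodule.subset_span (Or.inl ⟨_, _, hm, rfl⟩))
    · obtain rfl := Fin.castSucc_injective _ hk
      exact Submodule.subset_span (Or.inr ⟨k, hm, rfl⟩)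
    · exact absurd hk (Fin.castSucc_lt_last k).ne

theorem derivedIter_BLam (hΛ : IndexSet Λ) (l : ℕ) :
    derivedIter (BLam Λ) l = ((patternGraph Λ).closure l).patternSubspace := by
  induction l with
  | zero => exact BLam_eq_patternSubspace
  | succ l ih =>
    rw [derivedIter_succ, ih, (hΛ.good_patternGraph.closure l).derivedStep_patternSubspace,
      SBGraph.closure_succ]

theorem derivedIter_BLam_le (hΛ : IndexSet Λ) (l : ℕ) :
    derivedIter (BLam Λ) l ≤ derivedIter (BLam Λ) n := by
  have hG := hΛ.good_patternGraph
  rw [derivedIter_BLam hΛ, derivedIter_BLam hΛ]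
  exact Submodule.span_mono (SBGraph.patternGens_mono (fun _ _ => hG.closure_solid_stable l)
    (fun _ => hG.closure_broken_stable l))

end Stabilization

theorem stmt6_general (n : ℕ) (Λ : Set (Fin (n + 1) × Fin (n + 1)))
    (hΛ : IndexSet Λ) :
    derivedIter (BLam Λ) n = derivedIter (BLam Λ) (n + 1) ∧
    (derivedIter (BLam Λ) n : Set (Mat n)) =
      (LieSubalgebra.lieSpan ℝ (Mat n) (BLam Λ : Set (Mat n)) : Set (Mat n)) := by
  have hstable := derivedIter_BLam_le hΛ (n + 1)
  exact ⟨le_antisymm (derivedIter_le_succ _ n) hstable, (lieSpan_eq_derivedIter _ hstable).symm⟩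

/-- For D⁽⁰⁾ = B_Λ, the derived distributions stabilize after n steps:
`D⁽ⁿ⁾ = D⁽ⁿ⁺¹⁾`, and `D⁽ⁿ⁾` equals the Lie subalgebra generated by B_Λ (the smallest
real subspace containing B_Λ and closed under the bracket). -/
theorem stmt6 (n : ℕ) (hn : 1 ≤ n) (Λ : Set (Fin (n + 1) × Fin (n + 1)))
    (hΛ : IndexSet Λ) :
    derivedIter (BLam Λ) n = derivedIter (BLam Λ) (n + 1) ∧
    (derivedIter (BLam Λ) n : Set (Mat n)) =
      (LieSubalgebra.lieSpan ℝ (Mat n) (BLam Λ : Set (Mat n)) : Set (Mat n)) :=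
  stmt6_general n Λ hΛ
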